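/- (Theorem 2, GenRL guarantee, with an explicit valid sample size.) Let T : S → A → S be a shared transition function and R_i : S → A → ℝ, i ∈ I, reward functions forming a family of deterministic MDPs with shared transitions, let D be a probability mass function on I, let H ≥ 1, and let the policy π* : S → A be α-optimal everywhere. Assume 0 ≤ R_i(s,a) and R_i(s,a) + V*_i(h, T(s,a)) ≤ 1 for all i ∈ I, s ∈ S, a ∈ A, h < H. Suppose V̂ : I → ℕ → S → ℝ satisfies V*_i(h,s) ≥ V̂_i(h,s) ≥ V*_i(h,s) − β for all i, s, and h ≤ H. Fix s_0 ∈ S, ε, δ ∈ (0,1), and a positive integer n with n ≥ (2H²/ε²)·log(4·H·|A|/δ). Draw a sample table ω : Fin H × Fin n → I from the product measure in which each entry is independently distributed according to D, and define the GenRL path as a function of ω inductively for h = 0, …, H−1: a_h is an action attaining the maximum over a ∈ A of (1/n)·Σ_{j<n} [R_{ω(h,j)}(s_h, a) + V̂_{ω(h,j)}(H−h−1, T(s_h, a))] (with some fixed tie-breaking rule), and s_{h+1} = T(s_h, a_h). Then with probability at least 1 − δ over ω: E_{i~D}[Σ_{h<H} R_i(s_h, a_h)] ≥ max_{π' : S →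 A} E_{i~D}[V_i(π', H, s_0)] − ε − 3αH − 3βH. -/

import Mathlib

open scoped BigOperators

/-- The `h`-step value of a stationary deterministic policy `π` in the deterministic MDP
with transition function `T` and reward function `R`. -/
noncomputable def detVal {S A : Type*} (T : S → A → S) (R : S → A → ℝ)
    (π : S → A) : ℕ → S → ℝ
  | 0, _ => 0
  | h + 1, s => R s (π s) + detVal T R π h (T s (π s))

/-- The `h`-step optimal value in the deterministic MDP `(T, R)`. -/
noncomputable def detOptVal {S A : Type*} [Fintype A] [Nonempty A]
    (T : S → A → S) (R : S → A → ℝ) : ℕ → S → ℝ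
  | 0, _ => 0
  | h + 1, s => ⨆ a : A, (R s a + detOptVal T R h (T s a))

/-- Expectation of `f : I → ℝ` under the probability mass function `D` on the finite type
`I`: `E_{i~D}[f(i)] = Σ_i D(i)·f(i)`. -/
noncomputable def expectD {I : Type*} [Fintype I] (D : PMF I) (f : I → ℝ) : ℝ :=
  ∑ i : I, (D i).toReal * f i

/-!
For a fixed action sequence `as`, the advantages `Q̂(h, s_h, as h) - Q̂(h, s_h, π* s_h)` of `as`
over `π*` along its rollout, evaluated at the `H n` independent samples, concentrate around their
means by Hoeffding's inequality; a union bound over the `|A| ^ H` action sequences makes this hold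
simultaneously with probability `≥ 1 - δ`, in particular for the sample-dependent GenRL actions.
Greedy choice makes the empirical advantages nonnegative, so the expected advantages sum to more
than `-(ε + 2βH)`. For each task `i`, `V* - β ≤ V̂ ≤ V*` and the `α`-optimality of `π*` bound the
reward `R_i(s_h, a_h)` below by the advantage plus the drop `V*_i(H-h, s_h) - V*_i(H-h-1, s_{h+1})`
minus `α + β`; the drops telescope to `V*_i(H, s_0)`, which dominates the value of every policy.
-/

section DeterministicMDP

variable {S A : Type*}

def rollout (T : S → A → S) (s₀ : S) {H : ℕ} (as : Fin H → A) : ℕ → S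
  | 0 => s₀
  | h + 1 => if hh : h < H then T (rollout T s₀ as h) (as ⟨h, hh⟩) else rollout T s₀ as h

lemma rollout_eq_of_step (T : S → A → S) {H : ℕ} {s : ℕ → S} {a : ℕ → A}
    (hstep : ∀ h < H, s (h + 1) = T (s h) (a h)) :
    ∀ h ≤ H, rollout T (s 0) (fun k : Fin H => a k) h = s h
  | 0, _ => rfl
  | h + 1, hh => by
    rw [rollout, dif_pos (by omega), rollout_eq_of_step T hstep h (by omega), hstep h (by omega)]

variable [Fintype A] [Nonempty A] (T : S → A → S) (r : S → A → ℝ)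

lemma add_detOptVal_le_detOptVal_succ (h : ℕ) (s : S) (a : A) :
    r s a + detOptVal T r h (T s a) ≤ detOptVal T r (h + 1) s := by
  rw [detOptVal]
  exact le_ciSup (f := fun a => r s a + detOptVal T r h (T s a)) (Set.finite_range _).bddAbove a

lemma detVal_le_detOptVal (π : S → A) : ∀ h s, detVal T r π h s ≤ detOptVal T r h s
  | 0, _ => le_rfl
  | h + 1, s => by
    rw [detVal]
    linarith [detVal_le_detOptVal π h (T s (π s)), add_detOptVal_le_detOptVal_succ T r h s (π s)]

lemma detOptVal_nonneg (hr : ∀ s a, 0 ≤ r s a) : ∀ h s, 0 ≤ detOptVal T r h s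
  | 0, _ => le_rfl
  | h + 1, s => by
    have a : A := Classical.arbitrary A
    linarith [hr s a, detOptVal_nonneg hr h (T s a), add_detOptVal_le_detOptVal_succ T r h s a]

/-- `Q̂(h, s, a) = r(s, a) + V̂(H - h - 1, T(s, a))`, whose sample average GenRL maximises at
step `h`. -/
def qHat (vhat : ℕ → S → ℝ) (H h : ℕ) (s : S) (a : A) : ℝ :=
  r s a + vhat (H - h - 1) (T s a)

variable {T r} {vhat : ℕ → S → ℝ} {H : ℕ} {β : ℝ}

lemma qHat_mem_Icc (hr : ∀ s a, 0 ≤ r s a)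
    (hbdd : ∀ s a k, k < H → r s a + detOptVal T r k (T s a) ≤ 1)
    (hub : ∀ s k, k ≤ H → vhat k s ≤ detOptVal T r k s)
    (hlb : ∀ s k, k ≤ H → detOptVal T r k s - β ≤ vhat k s)
    {h : ℕ} (hh : h < H) (s : S) (a : A) :
    qHat T r vhat H h s a ∈ Set.Icc (-β) 1 := by
  have := hub (T s a) (H - h - 1) (by omega)
  have := hlb (T s a) (H - h - 1) (by omega)
  have := hbdd s a (H - h - 1) (by omega)
  have := hr s a
  have := detOptVal_nonneg T r hr (H - h - 1) (T s a)
  constructor <;> unfold qHat <;> linarith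

lemma qHat_sub_qHat_mem_Icc (hr : ∀ s a, 0 ≤ r s a)
    (hbdd : ∀ s a k, k < H → r s a + detOptVal T r k (T s a) ≤ 1)
    (hub : ∀ s k, k ≤ H → vhat k s ≤ detOptVal T r k s)
    (hlb : ∀ s k, k ≤ H → detOptVal T r k s - β ≤ vhat k s)
    {h : ℕ} (hh : h < H) (s : S) (a a' : A) :
    qHat T r vhat H h s a - qHat T r vhat H h s a' ∈ Set.Icc (-(1 + β)) (1 + β) := by
  obtain ⟨ha₁, ha₂⟩ := qHat_mem_Icc hr hbdd hub hlb hh s a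
  obtain ⟨ha₁', ha₂'⟩ := qHat_mem_Icc hr hbdd hub hlb hh s a'
  constructor <;> linarith

variable {π : S → A} {α : ℝ}

lemma qHat_sub_qHat_add_detOptVal_sub_le {h : ℕ} (hh : h < H)
    (hopt : ∀ s k, k ≤ H → detOptVal T r k s - α ≤ detVal T r π k s)
    (hub : ∀ s k, k ≤ H → vhat k s ≤ detOptVal T r k s)
    (hlb : ∀ s k, k ≤ H → detOptVal T r k s - β ≤ vhat k s) (s : S) (a : A) :
    qHat T r vhat H h s a - qHat T r vhat H h s (π s) + detOptVal T r (H - h) s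
      - detOptVal T r (H - (h + 1)) (T s a) - α - β ≤ r s a := by
  obtain ⟨k, hk⟩ : ∃ k, H - h = k + 1 := ⟨H - h - 1, by omega⟩
  have hk' : H - h - 1 = k := by omega
  have hk'' : H - (h + 1) = k := by omega
  have hvalπ : detVal T r π (k + 1) s = r s (π s) + detVal T r π k (T s (π s)) := rfl
  have := hopt s (k + 1) (by omega)
  have := hub (T s a) k (by omega)
  have := hlb (T s (π s)) k (by omega)
  have := detVal_le_detOptVal T r π k (T s (π s))
  rw [hk, hk'']
  unfold qHat
  rw [hk']
  linarith

lemma detOptVal_add_sum_qHat_sub_le_sum {s : ℕ → S} {a : ℕ → A}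
    (hstep : ∀ h < H, s (h + 1) = T (s h) (a h))
    (hopt : ∀ s k, k ≤ H → detOptVal T r k s - α ≤ detVal T r π k s)
    (hub : ∀ s k, k ≤ H → vhat k s ≤ detOptVal T r k s)
    (hlb : ∀ s k, k ≤ H → detOptVal T r k s - β ≤ vhat k s) :
    detOptVal T r H (s 0)
        + ∑ h ∈ Finset.range H, (qHat T r vhat H h (s h) (a h) - qHat T r vhat H h (s h) (π (s h)))
        - (α + β) * H ≤
      ∑ h ∈ Finset.range H, r (s h) (a h) := by
  have htele : ∑ h ∈ Finset.range H, (detOptVal T r (H - h) (s h)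
      - detOptVal T r (H - (h + 1)) (s (h + 1))) = detOptVal T r H (s 0) :=
    by simpa [detOptVal] using Finset.sum_range_sub' (fun h => detOptVal T r (H - h) (s h)) H
  have hsum := Finset.sum_le_sum fun h (hmem : h ∈ Finset.range H) => by
    have hh := Finset.mem_range.mp hmem
    simpa only [← hstep h hh] using
      qHat_sub_qHat_add_detOptVal_sub_le hh hopt hub hlb (s h) (a h)
  rw [← htele]
  simp only [Finset.sum_sub_distrib, Finset.sum_add_distrib, Finset.sum_const, Finset.card_range,
    nsmul_eq_mul] at hsum ⊢
  linarith

end DeterministicMDP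

open MeasureTheory ProbabilityTheory

section ExpectD

variable {I : Type*} [Fintype I] (D : PMF I)

lemma PMF.sum_toReal_eq_one : ∑ i, (D i).toReal = 1 := by
  have h := D.tsum_coe
  rw [tsum_fintype] at h
  rw [← ENNReal.toReal_sum fun i _ => D.apply_ne_top i, h, ENNReal.toReal_one]

lemma expectD_mono {f g : I → ℝ} (h : ∀ i, f i ≤ g i) : expectD D f ≤ expectD D g :=
  Finset.sum_le_sum fun i _ => mul_le_mul_of_nonneg_left (h i) ENNReal.toReal_nonneg

lemma expectD_add_sum_sub_const (f : I → ℝ) (g : ℕ → I → ℝ) (H : ℕ) (c : ℝ) :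
    expectD D (fun i => f i + ∑ h ∈ Finset.range H, g h i - c) =
      expectD D f + ∑ h ∈ Finset.range H, expectD D (g h) - c := by
  simp only [expectD, mul_sub, mul_add, Finset.mul_sum, Finset.sum_sub_distrib,
    Finset.sum_add_distrib, ← Finset.sum_mul, PMF.sum_toReal_eq_one, one_mul]
  rw [Finset.sum_comm]

lemma integral_toMeasure_eq_expectD [MeasurableSpace I] [MeasurableSingletonClass I]
    (f : I → ℝ) : ∫ i, f i ∂D.toMeasure = expectD D f := by
  simp [PMF.integral_eq_sum, expectD]

end ExpectD

lemma iSup_expectD_detVal_add_sum_sub_le {S A I : Type*} [Fintype A] [Nonempty A] [Fintype I]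
    {T : S → A → S} {R : I → S → A → ℝ} {Vhat : I → ℕ → S → ℝ} {D : PMF I} {π : S → A}
    {α β : ℝ} {H : ℕ} {s : ℕ → S} {a : ℕ → A}
    (hstep : ∀ h < H, s (h + 1) = T (s h) (a h))
    (hopt : ∀ i s k, k ≤ H → detOptVal T (R i) k s - α ≤ detVal T (R i) π k s)
    (hub : ∀ i s k, k ≤ H → Vhat i k s ≤ detOptVal T (R i) k s)
    (hlb : ∀ i s k, k ≤ H → detOptVal T (R i) k s - β ≤ Vhat i k s) :
    (⨆ π' : S → A, expectD D (fun i => detVal T (R i) π' H (s 0)))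
        + ∑ h ∈ Finset.range H, expectD D (fun i => qHat T (R i) (Vhat i) H h (s h) (a h)
            - qHat T (R i) (Vhat i) H h (s h) (π (s h)))
        - (α + β) * H ≤
      expectD D (fun i => ∑ h ∈ Finset.range H, R i (s h) (a h)) := by
  have hsup : (⨆ π' : S → A, expectD D (fun i => detVal T (R i) π' H (s 0))) ≤
      expectD D (fun i => detOptVal T (R i) H (s 0)) :=
    ciSup_le fun π' => expectD_mono D fun i => detVal_le_detOptVal T (R i) π' H (s 0)
  calc _ ≤ expectD D (fun i => detOptVal T (R i) H (s 0))
        + ∑ h ∈ Finset.range H, expectD D (fun i => qHat T (R i) (Vhat i) H h (s h) (a h)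
            - qHat T (R i) (Vhat i) H h (s h) (π (s h)))
        - (α + β) * H := by gcongr
    _ = expectD D (fun i => detOptVal T (R i) H (s 0)
        + ∑ h ∈ Finset.range H, (qHat T (R i) (Vhat i) H h (s h) (a h)
            - qHat T (R i) (Vhat i) H h (s h) (π (s h)))
        - (α + β) * H) := (expectD_add_sum_sub_const D _ _ H _).symm
    _ ≤ _ := expectD_mono D fun i =>
        detOptVal_add_sum_qHat_sub_le_sum hstep (hopt i) (hub i) (hlb i)

section Hoeffding

variable {Z I : Type*} [Fintype Z] [Fintype I] [MeasurableSpace I] [MeasurableSingletonClass I]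
  (D : PMF I)

lemma measureReal_sum_sub_expectD_ge_le (g : Z → I → ℝ) {a b : ℝ}
    (hg : ∀ z i, g z i ∈ Set.Icc a b) {r : ℝ} (hr : 0 ≤ r) :
    (Measure.pi fun _ : Z => D.toMeasure).real
        {ω | r ≤ ∑ z, (g z (ω z) - expectD D (g z))} ≤
      Real.exp (-2 * r ^ 2 / (Fintype.card Z * (b - a) ^ 2)) := by
  set μ := Measure.pi fun _ : Z => D.toMeasure
  have hmean (z : Z) : μ[fun ω => g z (ω z)] = expectD D (g z) := by
    rw [← integral_toMeasure_eq_expectD,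
      ← (measurePreserving_eval (fun _ : Z => D.toMeasure) z).map_eq,
      integral_map (measurable_pi_apply z).aemeasurable
        (measurable_of_finite _).aestronglyMeasurable]
  have hsubG (z : Z) : HasSubgaussianMGF (fun ω => g z (ω z) - expectD D (g z))
      ((‖b - a‖₊ / 2) ^ 2) μ := by
    simpa only [hmean] using hasSubgaussianMGF_of_mem_Icc (μ := μ) (X := fun ω => g z (ω z))
      (measurable_of_finite _).aemeasurable (ae_of_all _ fun ω => hg z (ω z))
  have hindep : iIndepFun (fun z ω => g z (ω z) - expectD D (g z)) μ :=
    iIndepFun_pi (X := fun z i => g z i - expectD D (g z)) fun z => .of_discrete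
  refine (HasSubgaussianMGF.measure_sum_ge_le_of_iIndepFun hindep (s := Finset.univ)
    (fun z _ => hsubG z) hr).trans_eq ?_
  congr 1
  simp only [Finset.sum_const, Finset.card_univ, nsmul_eq_mul, NNReal.coe_mul, NNReal.coe_natCast,
    NNReal.coe_pow, NNReal.coe_div, coe_nnnorm, Real.norm_eq_abs, NNReal.coe_ofNat, div_pow,
    sq_abs]
  rw [show 2 * (Fintype.card Z * ((b - a) ^ 2 / 2 ^ 2)) = Fintype.card Z * (b - a) ^ 2 / 2 by ring,
    div_div_eq_mul_div]
  ring

lemma measure_exists_sum_sub_expectD_ge_le {K : Type*} [Fintype K] (g : K → Z → I → ℝ)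
    {a b : ℝ} (hg : ∀ k z i, g k z i ∈ Set.Icc a b) {r : ℝ} (hr : 0 ≤ r) :
    (Measure.pi fun _ : Z => D.toMeasure)
        {ω | ∃ k, r ≤ ∑ z, (g k z (ω z) - expectD D (g k z))} ≤
      ENNReal.ofReal (Fintype.card K * Real.exp (-2 * r ^ 2 / (Fintype.card Z * (b - a) ^ 2))) := by
  rw [Set.ofPred_exists]
  refine (measure_iUnion_fintype_le _ _).trans ?_
  calc ∑ k, (Measure.pi fun _ : Z => D.toMeasure) {ω | r ≤ ∑ z, (g k z (ω z) - expectD D (g k z))}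
      ≤ ∑ _k : K, ENNReal.ofReal (Real.exp (-2 * r ^ 2 / (Fintype.card Z * (b - a) ^ 2))) :=
        Finset.sum_le_sum fun k _ => by
          rw [← ofReal_measureReal]
          exact ENNReal.ofReal_le_ofReal (measureReal_sum_sub_expectD_ge_le D (g k) (hg k) hr)
    _ = _ := by
        rw [Finset.sum_const, Finset.card_univ, nsmul_eq_mul, ENNReal.ofReal_mul (by positivity),
          ENNReal.ofReal_natCast]

end Hoeffding

lemma card_pow_mul_exp_neg_le {N H n : ℕ} {β ε δ : ℝ} (hN : 0 < N) (hH : 1 ≤ H) (hn : 0 < n)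
    (hβ : 0 ≤ β) (hε : 0 < ε) (hε1 : ε < 1) (hδ : 0 < δ) (hδ1 : δ < 1)
    (hnsize : 2 * (H : ℝ) ^ 2 / ε ^ 2 * Real.log (4 * H * N / δ) ≤ n) :
    (N : ℝ) ^ H * Real.exp (-2 * (n * (ε + 2 * β * H)) ^ 2 / (H * n * (2 * (1 + β)) ^ 2))
      ≤ δ := by
  have hH' : (1 : ℝ) ≤ H := by exact_mod_cast hH
  have hN' : (0 : ℝ) < N := by exact_mod_cast hN
  have hn' : (0 : ℝ) < n := by exact_mod_cast hn
  set L := Real.log (4 * H * N / δ)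
  have hL : 2 * H ^ 2 * L ≤ n * ε ^ 2 := by
    rwa [div_mul_eq_mul_div, div_le_iff₀ (by positivity)] at hnsize
  have hτ : ε * (1 + β) ≤ ε + 2 * β * H := by nlinarith
  have hexponent : H * L ≤ 2 * (n * (ε + 2 * β * H)) ^ 2 / (H * n * (2 * (1 + β)) ^ 2) := by
    rw [le_div_iff₀ (by positivity)]
    calc H * L * (H * n * (2 * (1 + β)) ^ 2) = 2 * n * (1 + β) ^ 2 * (2 * H ^ 2 * L) := by ring
      _ ≤ 2 * n * (1 + β) ^ 2 * (n * ε ^ 2) := by gcongr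
      _ = 2 * n ^ 2 * (ε * (1 + β)) ^ 2 := by ring
      _ ≤ 2 * n ^ 2 * (ε + 2 * β * H) ^ 2 := by
        have : 0 ≤ ε * (1 + β) := by positivity
        gcongr
      _ = 2 * (n * (ε + 2 * β * H)) ^ 2 := by ring
  calc _ ≤ (N : ℝ) ^ H * Real.exp (-(H * L)) := by
        gcongr
        rw [neg_mul, neg_div]
        exact neg_le_neg hexponent
    _ = (δ / (4 * H)) ^ H := by
        rw [← mul_neg, Real.exp_nat_mul, Real.exp_neg, Real.exp_log (by positivity), ← mul_pow]
        congr 1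
        field_simp
    _ ≤ δ / (4 * H) := pow_le_of_le_one (by positivity)
        ((div_le_one (by positivity)).mpr (by linarith)) (by omega)
    _ ≤ δ := div_le_self hδ.le (by linarith)

lemma neg_lt_sum_of_sum_sub_lt {H n : ℕ} (hn : 0 < n) {x : Fin H → Fin n → ℝ} {m : Fin H → ℝ}
    (hx : ∀ h, 0 ≤ ∑ j, x h j) {τ : ℝ} (hlt : ∑ z : Fin H × Fin n, (x z.1 z.2 - m z.1) < n * τ) :
    -τ < ∑ h, m h := by
  have hn' : (0 : ℝ) < n := by exact_mod_cast hn
  rw [Fintype.sum_prod_type] at hlt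
  simp only [Finset.sum_sub_distrib, Finset.sum_const, Finset.card_univ, Fintype.card_fin,
    nsmul_eq_mul, ← Finset.mul_sum] at hlt
  nlinarith [Finset.sum_nonneg fun h (_ : h ∈ Finset.univ) => hx h]

lemma ofReal_one_sub_le_of_compl_subset {Ω : Type*} [MeasurableSpace Ω] {μ : Measure Ω}
    [IsProbabilityMeasure μ] {B G : Set Ω} {δ : ℝ} (hδ : 0 ≤ δ) (hB : μ B ≤ ENNReal.ofReal δ)
    (hBG : Bᶜ ⊆ G) : ENNReal.ofReal (1 - δ) ≤ μ G := by
  have hcover : 1 ≤ μ B + μ G := by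
    rw [← measure_univ (μ := μ)]
    exact (measure_mono fun ω _ => (em (ω ∈ B)).imp_right (hBG ·)).trans (measure_union_le B G)
  rw [ENNReal.ofReal_sub 1 hδ, ENNReal.ofReal_one, tsub_le_iff_left]
  exact hcover.trans (add_le_add_left hB _)

theorem genRL_guarantee_general
    {S A I : Type*} [Fintype A] [Nonempty A]
    [Fintype I] [MeasurableSpace I] [MeasurableSingletonClass I]
    (T : S → A → S) (R : I → S → A → ℝ)
    (D : PMF I)
    (H : ℕ) (hH : 1 ≤ H)
    (α β : ℝ) (hα : 0 ≤ α) (hβ : 0 ≤ β)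
    (πstar : S → A)
    (hopt : ∀ i : I, ∀ s : S, ∀ h : ℕ, h ≤ H →
      detVal T (R i) πstar h s ≥ detOptVal T (R i) h s - α)
    (hRnonneg : ∀ i : I, ∀ s : S, ∀ a : A, 0 ≤ R i s a)
    (hbdd : ∀ i : I, ∀ s : S, ∀ a : A, ∀ h : ℕ, h < H →
      R i s a + detOptVal T (R i) h (T s a) ≤ 1)
    (Vhat : I → ℕ → S → ℝ)
    (hVhatub : ∀ i : I, ∀ s : S, ∀ h : ℕ, h ≤ H → Vhat i h s ≤ detOptVal T (R i) h s)
    (hVhatlb : ∀ i : I, ∀ s : S, ∀ h : ℕ, h ≤ H →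
      detOptVal T (R i) h s - β ≤ Vhat i h s)
    (s0 : S)
    (ε δ : ℝ) (hε : 0 < ε) (hε1 : ε < 1) (hδ : 0 < δ) (hδ1 : δ < 1)
    (n : ℕ) (hn : 0 < n)
    (hnsize : (2 * (H : ℝ) ^ 2 / ε ^ 2) * Real.log (4 * H * (Fintype.card A) / δ)
      ≤ (n : ℝ))
    -- the GenRL greedy path, as a function of the sample table `ω`
    (spath : (Fin H × Fin n → I) → ℕ → S)
    (apath : (Fin H × Fin n → I) → ℕ → A)
    (hs0 : ∀ ω : Fin H × Fin n → I, spath ω 0 = s0)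
    (hstep : ∀ ω : Fin H × Fin n → I, ∀ h : ℕ, ∀ hh : h < H,
      spath ω (h + 1) = T (spath ω h) (apath ω h))
    (hgreedy : ∀ ω : Fin H × Fin n → I, ∀ h : ℕ, ∀ hh : h < H, ∀ a' : A,
      (1 / (n : ℝ)) * ∑ j : Fin n,
          (R (ω (⟨h, hh⟩, j)) (spath ω h) a' +
            Vhat (ω (⟨h, hh⟩, j)) (H - h - 1) (T (spath ω h) a')) ≤
        (1 / (n : ℝ)) * ∑ j : Fin n,
          (R (ω (⟨h, hh⟩, j)) (spath ω h) (apath ω h) +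
            Vhat (ω (⟨h, hh⟩, j)) (H - h - 1) (T (spath ω h) (apath ω h)))) :
    ENNReal.ofReal (1 - δ) ≤
      (MeasureTheory.Measure.pi fun _ : Fin H × Fin n => D.toMeasure)
        {ω : Fin H × Fin n → I |
          expectD D (fun i => ∑ h ∈ Finset.range H, R i (spath ω h) (apath ω h)) ≥
            (⨆ π' : S → A, expectD D (fun i => detVal T (R i) π' H s0)) -
              ε - 3 * α * H - 3 * β * H} := by
  let gap : (Fin H → A) → Fin H → I → ℝ := fun as h i =>
    qHat T (R i) (Vhat i) H h (rollout T s0 as h) (as h)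
      - qHat T (R i) (Vhat i) H h (rollout T s0 as h) (πstar (rollout T s0 as h))
  have hgap (as : Fin H → A) (h : Fin H) (i : I) : gap as h i ∈ Set.Icc (-(1 + β)) (1 + β) :=
    qHat_sub_qHat_mem_Icc (hRnonneg i) (hbdd i) (hVhatub i) (hVhatlb i) h.isLt _ _ _
  have hbad := measure_exists_sum_sub_expectD_ge_le D (fun as (z : Fin H × Fin n) => gap as z.1)
    (fun as z => hgap as z.1) (r := n * (ε + 2 * β * H)) (by positivity)
  have hnum := card_pow_mul_exp_neg_le Fintype.card_pos hH hn hβ hε hε1 hδ hδ1 hnsize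
  simp only [Fintype.card_fun, Fintype.card_prod, Fintype.card_fin, Nat.cast_pow, Nat.cast_mul,
    show 1 + β - -(1 + β) = 2 * (1 + β) by ring] at hbad
  refine ofReal_one_sub_le_of_compl_subset hδ.le (hbad.trans (ENNReal.ofReal_le_ofReal hnum))
    fun ω hω => ?_
  simp only [Set.mem_compl_iff, Set.mem_ofPred_eq, not_exists, not_le] at hω
  have hroll := rollout_eq_of_step T (hstep ω)
  rw [hs0] at hroll
  have hempirical (h : Fin H) : 0 ≤ ∑ j, gap (fun k => apath ω k) h (ω (h, j)) := by
    have := hgreedy ω h h.isLt (πstar (spath ω h))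
    simp only [gap, hroll h h.isLt.le, Finset.sum_sub_distrib, sub_nonneg]
    exact le_of_mul_le_mul_left this (by positivity)
  have hmean := neg_lt_sum_of_sum_sub_lt hn (m := fun h => expectD D (gap _ h)) hempirical
    (hω fun k => apath ω k)
  have hsum : ∑ h : Fin H, expectD D (gap (fun k => apath ω k) h) =
      ∑ h ∈ Finset.range H, expectD D (fun i => qHat T (R i) (Vhat i) H h (spath ω h) (apath ω h)
        - qHat T (R i) (Vhat i) H h (spath ω h) (πstar (spath ω h))) := by
    rw [← Fin.sum_univ_eq_sum_range]
    exact Finset.sum_congr rfl fun h _ => by simp only [gap, hroll h h.isLt.le]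
  have hvalue := iSup_expectD_detVal_add_sum_sub_le (D := D) (hstep ω) hopt hVhatub hVhatlb
  rw [hs0] at hvalue
  have hαH : 0 ≤ α * H := by positivity
  simp only [Set.mem_ofPred_eq]
  linarith

/-- **Theorem 2 (GenRL guarantee, with an explicit valid sample size).**
`spath ω` and `apath ω` denote the GenRL greedy path computed (with an arbitrary fixed
tie-breaking rule) from the sample table `ω : Fin H × Fin n → I`, where at step `h` the
action maximizes the empirical average over the `n` fresh samples `ω(h, ·)` of
`R_i(s_h, a) + V̂_i(H−h−1, T(s_h, a))`.  With probability at least `1 − δ` over `ω`, the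
expected cumulative reward of the path is at least
`max_{π'} E[V_i(π', H, s_0)] − ε − 3αH − 3βH` (the maximum over the finitely many
deterministic stationary policies is written as a supremum). -/
theorem genRL_guarantee
    {S A I : Type*} [Fintype S] [Nonempty S] [Fintype A] [Nonempty A]
    [Fintype I] [Nonempty I] [MeasurableSpace I] [MeasurableSingletonClass I]
    (T : S → A → S) (R : I → S → A → ℝ)
    (D : PMF I)
    (H : ℕ) (hH : 1 ≤ H)
    (α β : ℝ) (hα : 0 ≤ α) (hβ : 0 ≤ β)
    (πstar : S → A)
    (hopt : ∀ i : I, ∀ s : S, ∀ h : ℕ, h ≤ H →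
      detVal T (R i) πstar h s ≥ detOptVal T (R i) h s - α)
    (hRnonneg : ∀ i : I, ∀ s : S, ∀ a : A, 0 ≤ R i s a)
    (hbdd : ∀ i : I, ∀ s : S, ∀ a : A, ∀ h : ℕ, h < H →
      R i s a + detOptVal T (R i) h (T s a) ≤ 1)
    (Vhat : I → ℕ → S → ℝ)
    (hVhatub : ∀ i : I, ∀ s : S, ∀ h : ℕ, h ≤ H → Vhat i h s ≤ detOptVal T (R i) h s)
    (hVhatlb : ∀ i : I, ∀ s : S, ∀ h : ℕ, h ≤ H →
      detOptVal T (R i) h s - β ≤ Vhat i h s)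
    (s0 : S)
    (ε δ : ℝ) (hε : 0 < ε) (hε1 : ε < 1) (hδ : 0 < δ) (hδ1 : δ < 1)
    (n : ℕ) (hn : 0 < n)
    (hnsize : (2 * (H : ℝ) ^ 2 / ε ^ 2) * Real.log (4 * H * (Fintype.card A) / δ)
      ≤ (n : ℝ))
    -- the GenRL greedy path, as a function of the sample table `ω`
    (spath : (Fin H × Fin n → I) → ℕ → S)
    (apath : (Fin H × Fin n → I) → ℕ → A)
    (hs0 : ∀ ω : Fin H × Fin n → I, spath ω 0 = s0)
    (hstep : ∀ ω : Fin H × Fin n → I, ∀ h : ℕ, ∀ hh : h < H,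
      spath ω (h + 1) = T (spath ω h) (apath ω h))
    (hgreedy : ∀ ω : Fin H × Fin n → I, ∀ h : ℕ, ∀ hh : h < H, ∀ a' : A,
      (1 / (n : ℝ)) * ∑ j : Fin n,
          (R (ω (⟨h, hh⟩, j)) (spath ω h) a' +
            Vhat (ω (⟨h, hh⟩, j)) (H - h - 1) (T (spath ω h) a')) ≤
        (1 / (n : ℝ)) * ∑ j : Fin n,
          (R (ω (⟨h, hh⟩, j)) (spath ω h) (apath ω h) +
            Vhat (ω (⟨h, hh⟩, j)) (H - h - 1) (T (spath ω h) (apath ω h)))) :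
    ENNReal.ofReal (1 - δ) ≤
      (MeasureTheory.Measure.pi fun _ : Fin H × Fin n => D.toMeasure)
        {ω : Fin H × Fin n → I |
          expectD D (fun i => ∑ h ∈ Finset.range H, R i (spath ω h) (apath ω h)) ≥
            (⨆ π' : S → A, expectD D (fun i => detVal T (R i) π' H s0)) -
              ε - 3 * α * H - 3 * β * H} :=
  genRL_guarantee_general T R D H hH α β hα hβ πstar hopt hRnonneg hbdd Vhat hVhatub hVhatlb s0 ε δ
    hε hε1 hδ hδ1 n hn hnsize spath apath hs0 hstep hgreedy
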